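/- For every positive integer n with n ≡ 11 (mod 32), 3·t(2,3,3;n) = 4·N(1,3,3;n+1). -/
import Mathlib


def tri (x : ℤ) : ℤ := x * (x + 1) / 2

noncomputable def N (a b c n : ℕ) : ℕ :=
  Nat.card {p : ℤ × ℤ × ℤ // (n : ℤ) = a * p.1 ^ 2 + b * p.2.1 ^ 2 + c * p.2.2 ^ 2}

noncomputable def t (a b c n : ℕ) : ℕ :=
  Nat.card {p : ℤ × ℤ × ℤ // (n : ℤ) = a * tri p.1 + b * tri p.2.1 + c * tri p.2.2}

noncomputable def T (a b c n : ℕ) : ℕ :=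
  Nat.card {p : ℕ × ℕ × ℕ // (n : ℤ) = a * tri p.1 + b * tri p.2.1 + c * tri p.2.2}

lemma two_tri (x : ℤ) : 2 * tri x = x * (x + 1) := by
  obtain ⟨T, hT⟩ := Int.even_mul_succ_self x
  unfold tri
  rw [hT]; omega


lemma evensq (x : ℤ) : ∃ T, x * (x+1) = T + T := Int.even_mul_succ_self x

-- q = 8k+3 : x even, exactly one of y,z odd
lemma L1 {k x y z : ℤ} (h : 8*k+3 = x^2+3*y^2+3*z^2) : Even x ∧ (Odd y ↔ Even z) := by
  obtain ⟨a, ha | ha⟩ := Int.even_or_odd' x <;>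
  obtain ⟨b, hb | hb⟩ := Int.even_or_odd' y <;>
  obtain ⟨c, hc | hc⟩ := Int.even_or_odd' z <;>
  subst ha <;> subst hb <;> subst hc
  · -- e e e
    exfalso
    obtain ⟨A, hA⟩ : ∃ A, 8*k+3 = 4*A := ⟨a^2+3*b^2+3*c^2, by linear_combination h⟩
    omega
  · -- e e o
    refine ⟨⟨a, by ring⟩, ?_, ?_⟩
    · rintro ⟨j, hj⟩; omega
    · rintro ⟨j, hj⟩; omega
  · -- e o e
    exact ⟨⟨a, by ring⟩, fun _ => ⟨c, by ring⟩, fun _ => ⟨b, rfl⟩⟩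
  · -- e o o
    exfalso
    obtain ⟨U, hU⟩ := evensq b
    obtain ⟨V, hV⟩ := evensq c
    obtain ⟨A, hA⟩ : ∃ A, 8*k+3 = 4*A + 24*U + 24*V + 6 :=
      ⟨a^2, by linear_combination h + 12*hU + 12*hV⟩
    omega
  · -- o e e
    exfalso
    obtain ⟨T, hT⟩ := evensq a
    obtain ⟨A, hA⟩ : ∃ A, ∃ B, 8*k+3 = 8*T + 1 + 12*A + 12*B :=
      ⟨b^2, c^2, by linear_combination h + 4*hT⟩
    obtain ⟨B, hB⟩ := hA
    omega
  · -- o e o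
    exfalso
    obtain ⟨T, hT⟩ := evensq a
    obtain ⟨V, hV⟩ := evensq c
    obtain ⟨A, hA⟩ : ∃ A, 8*k+3 = 8*T + 1 + 12*A + 24*V + 3 :=
      ⟨b^2, by linear_combination h + 4*hT + 12*hV⟩
    omega
  · -- o o e
    exfalso
    obtain ⟨T, hT⟩ := evensq a
    obtain ⟨U, hU⟩ := evensq b
    obtain ⟨C, hC⟩ : ∃ C, 8*k+3 = 8*T + 24*U + 12*C + 4 :=
      ⟨c^2, by linear_combination h + 4*hT + 12*hU⟩
    omega
  · -- o o o
    exfalso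
    obtain ⟨T, hT⟩ := evensq a
    obtain ⟨U, hU⟩ := evensq b
    obtain ⟨V, hV⟩ := evensq c
    have h' : 8*k+3 = 8*T+1 + 24*U+3 + 24*V+3 := by
      linear_combination h + 4*hT + 12*hU + 12*hV
    omega

-- 4q = 32k+12
lemma L2 {k x y z : ℤ} (h : 32*k+12 = x^2+3*y^2+3*z^2) :
    (Even x → Even y ∧ Even z) ∧
    (Odd x → ((Odd y ↔ Even z) ∧ (Odd y → (4:ℤ) ∣ z) ∧ (Odd z → (4:ℤ) ∣ y))) := by
  obtain ⟨a, ha | ha⟩ := Int.even_or_odd' x <;>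
  obtain ⟨b, hb | hb⟩ := Int.even_or_odd' y <;>
  obtain ⟨c, hc | hc⟩ := Int.even_or_odd' z <;>
  subst ha <;> subst hb <;> subst hc
  · -- e e e
    refine ⟨fun _ => ⟨⟨b, by ring⟩, ⟨c, by ring⟩⟩, ?_⟩
    rintro ⟨j, hj⟩; exact absurd hj (by omega)
  · -- e e o
    exfalso
    obtain ⟨V, hV⟩ := evensq c
    obtain ⟨A, hA⟩ : ∃ A, ∃ B, 32*k+12 = 4*A + 12*B + 24*V + 3 :=
      ⟨a^2, b^2, by linear_combination h + 12*hV⟩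
    obtain ⟨B, hB⟩ := hA; omega
  · -- e o e
    exfalso
    obtain ⟨U, hU⟩ := evensq b
    obtain ⟨A, hA⟩ : ∃ A, ∃ B, 32*k+12 = 4*A + 24*U + 3 + 12*B :=
      ⟨a^2, c^2, by linear_combination h + 12*hU⟩
    obtain ⟨B, hB⟩ := hA; omega
  · -- e o o
    exfalso
    obtain ⟨U, hU⟩ := evensq b
    obtain ⟨V, hV⟩ := evensq c
    obtain ⟨A, hA⟩ : ∃ A, 32*k+12 = 4*A + 24*U + 24*V + 6 :=
      ⟨a^2, by linear_combination h + 12*hU + 12*hV⟩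
    omega
  · -- o e e
    exfalso
    obtain ⟨T, hT⟩ := evensq a
    obtain ⟨A, hA⟩ : ∃ A, ∃ B, 32*k+12 = 8*T + 1 + 12*A + 12*B :=
      ⟨b^2, c^2, by linear_combination h + 4*hT⟩
    obtain ⟨B, hB⟩ := hA; omega
  · -- o e o : need Odd z → 4 ∣ y, i.e. b even
    obtain ⟨T, hT⟩ := evensq a
    obtain ⟨V, hV⟩ := evensq c
    obtain ⟨d, hd | hd⟩ := Int.even_or_odd' b <;> subst hd
    · refine ⟨?_, fun _ => ⟨⟨?_, ?_⟩, ?_, fun _ => ⟨d, by ring⟩⟩⟩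
      · rintro ⟨j, hj⟩; exact absurd hj (by omega)
      · rintro ⟨j, hj⟩; exact absurd hj (by omega)
      · rintro ⟨j, hj⟩; exact absurd hj (by omega)
      · rintro ⟨j, hj⟩; exact absurd hj (by omega)
    · exfalso
      obtain ⟨U, hU⟩ := evensq d
      have h' : 32*k+12 = 8*T + 1 + 3*(32*U+4) + 24*V + 3 := by
        linear_combination h + 4*hT + 12*hV + 48*hU
      omega
  · -- o o e : need Odd y → 4 ∣ z, i.e. c even
    obtain ⟨T, hT⟩ := evensq a
    obtain ⟨U, hU⟩ := evensq b
    obtain ⟨d, hd | hd⟩ := Int.even_or_odd' c <;> subst hd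
    · refine ⟨?_, fun _ => ⟨⟨fun _ => ⟨2*d, by ring⟩, fun _ => ⟨b, rfl⟩⟩,
        fun _ => ⟨d, by ring⟩, ?_⟩⟩
      · rintro ⟨j, hj⟩; exact absurd hj (by omega)
      · rintro ⟨j, hj⟩; exact absurd hj (by omega)
    · exfalso
      obtain ⟨V, hV⟩ := evensq d
      have h' : 32*k+12 = 8*T + 1 + 24*U + 3 + 3*(32*V+4) := by
        linear_combination h + 4*hT + 12*hU + 48*hV
      omega
  · -- o o o
    exfalso
    obtain ⟨T, hT⟩ := evensq a
    obtain ⟨U, hU⟩ := evensq b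
    obtain ⟨V, hV⟩ := evensq c
    have h' : 32*k+12 = 8*T+1 + 24*U+3 + 24*V+3 := by
      linear_combination h + 4*hT + 12*hU + 12*hV
    omega

-- 16q = 128k+48
lemma L3 {k x y z : ℤ} (h : 128*k+48 = x^2+3*y^2+3*z^2) (hx : Odd x) :
    (Odd y ↔ Even z) ∧ (Odd y → ∃ c, z = 2*c ∧ Odd c) ∧ (Odd z → ∃ b, y = 2*b ∧ Odd b) := by
  obtain ⟨a, ha⟩ := hx
  subst ha
  obtain ⟨T, hT⟩ := evensq a
  obtain ⟨b, hb | hb⟩ := Int.even_or_odd' y <;>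
  obtain ⟨c, hc | hc⟩ := Int.even_or_odd' z <;>
  subst hb <;> subst hc
  · -- e e
    exfalso
    obtain ⟨A, hA⟩ : ∃ A, ∃ B, 128*k+48 = 8*T + 1 + 12*A + 12*B :=
      ⟨b^2, c^2, by linear_combination h + 4*hT⟩
    obtain ⟨B, hB⟩ := hA; omega
  · -- y even (need b odd), z odd
    obtain ⟨V, hV⟩ := evensq c
    obtain ⟨d, hd | hd⟩ := Int.even_or_odd' b <;> subst hd
    · exfalso
      obtain ⟨D, hD⟩ : ∃ D, 128*k+48 = 8*T + 1 + 48*D + 24*V + 3 :=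
        ⟨d^2, by linear_combination h + 4*hT + 12*hV⟩
      omega
    · refine ⟨⟨?_, ?_⟩, ?_, fun _ => ⟨2*d+1, by ring, ⟨d, rfl⟩⟩⟩
      · rintro ⟨j, hj⟩; exact absurd hj (by omega)
      · rintro ⟨j, hj⟩; exact absurd hj (by omega)
      · rintro ⟨j, hj⟩; exact absurd hj (by omega)
  · -- y odd, z even (need c odd)
    obtain ⟨U, hU⟩ := evensq b
    obtain ⟨d, hd | hd⟩ := Int.even_or_odd' c <;> subst hd
    · exfalso
      obtain ⟨D, hD⟩ : ∃ D, 128*k+48 = 8*T + 1 + 24*U + 3 + 48*D :=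
        ⟨d^2, by linear_combination h + 4*hT + 12*hU⟩
      omega
    · refine ⟨⟨fun _ => ⟨2*d+1, by ring⟩, fun _ => ⟨b, rfl⟩⟩,
        fun _ => ⟨2*d+1, by ring, ⟨d, rfl⟩⟩, ?_⟩
      rintro ⟨j, hj⟩; exact absurd hj (by omega)
  · -- o o
    exfalso
    obtain ⟨U, hU⟩ := evensq b
    obtain ⟨V, hV⟩ := evensq c
    have h' : 128*k+48 = 8*T+1 + 24*U+3 + 24*V+3 := by
      linear_combination h + 4*hT + 12*hU + 12*hV
    omega

lemma card_bij {A B : ℤ×ℤ×ℤ → Prop} (f : ℤ×ℤ×ℤ → ℤ×ℤ×ℤ)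
    (hmem : ∀ p, A p → B (f p))
    (hinj : ∀ p q, A p → A q → f p = f q → p = q)
    (hsurj : ∀ q, B q → ∃ p, A p ∧ f p = q) :
    Nat.card {p // A p} = Nat.card {p // B p} := by
  apply Nat.card_congr
  refine Equiv.ofBijective (fun p => ⟨f p.1, hmem p.1 p.2⟩) ⟨?_, ?_⟩
  · intro p q hpq
    exact Subtype.ext (hinj _ _ p.2 q.2 (congrArg Subtype.val hpq))
  · intro q
    obtain ⟨p, hp, hfp⟩ := hsurj q.1 q.2
    exact ⟨⟨p, hp⟩, Subtype.ext hfp⟩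

lemma split_card {α : Type*} (P Q : α → Prop) (h : Finite {x // P x}) :
    Nat.card {x // P x} = Nat.card {x // P x ∧ Q x} + Nat.card {x // P x ∧ ¬ Q x} := by
  classical
  have e1 : {x : {x // P x} // Q x.val} ≃ {x // P x ∧ Q x} :=
    Equiv.subtypeSubtypeEquivSubtypeInter P Q
  have e2 : {x : {x // P x} // ¬ Q x.val} ≃ {x // P x ∧ ¬ Q x} :=
    Equiv.subtypeSubtypeEquivSubtypeInter P (fun x => ¬ Q x)
  have e3 : {x : {x // P x} // Q x.val} ⊕ {x : {x // P x} // ¬ Q x.val} ≃ {x // P x} :=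
    Equiv.sumCompl _
  have f1 : Finite {x : {x // P x} // Q x.val} := Subtype.finite
  have f2 : Finite {x : {x // P x} // ¬ Q x.val} := Subtype.finite
  rw [← Nat.card_congr e3, Nat.card_sum, Nat.card_congr e1, Nat.card_congr e2]

lemma split_card' {α : Type*} (P Q R : α → Prop) (h : Finite {x // P x})
    (hQR : ∀ x, P x → (¬ Q x ↔ R x)) :
    Nat.card {x // P x} = Nat.card {x // P x ∧ Q x} + Nat.card {x // P x ∧ R x} := by
  rw [split_card P Q h]
  congr 1
  apply Nat.card_congr
  refine Equiv.subtypeEquivRight (fun x => ?_)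
  constructor
  · rintro ⟨h1, h2⟩; exact ⟨h1, (hQR x h1).1 h2⟩
  · rintro ⟨h1, h2⟩; exact ⟨h1, fun hq => absurd h2 (by
      intro hr
      exact ((hQR x h1).2 hr) hq)⟩

lemma finite_and {α : Type*} {P Q : α → Prop} (h : Finite {x // P x}) :
    Finite {x // P x ∧ Q x} :=
  Set.Finite.to_subtype ((Set.finite_coe_iff.mp h).subset (fun x hx => hx.1))

lemma finite3 (M : ℤ) : Finite {p : ℤ × ℤ × ℤ // M = p.1 ^ 2 + 3 * p.2.1 ^ 2 + 3 * p.2.2 ^ 2} := by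
  have hsub : {p : ℤ × ℤ × ℤ | M = p.1 ^ 2 + 3 * p.2.1 ^ 2 + 3 * p.2.2 ^ 2} ⊆
      (Set.Icc (-M) M) ×ˢ ((Set.Icc (-M) M) ×ˢ (Set.Icc (-M) M)) := by
    rintro ⟨x, y, z⟩ hp
    simp only [Set.mem_setOf_eq] at hp
    have bx : -M ≤ x ∧ x ≤ M := abs_le.mp (by nlinarith [abs_nonneg x, sq_abs x, sq_nonneg y, sq_nonneg z])
    have by' : -M ≤ y ∧ y ≤ M := abs_le.mp (by nlinarith [abs_nonneg y, sq_abs y, sq_nonneg x, sq_nonneg z])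
    have bz : -M ≤ z ∧ z ≤ M := abs_le.mp (by nlinarith [abs_nonneg z, sq_abs z, sq_nonneg x, sq_nonneg y])
    exact ⟨⟨bx.1, bx.2⟩, ⟨by'.1, by'.2⟩, ⟨bz.1, bz.2⟩⟩
  exact (((Set.finite_Icc _ _).prod ((Set.finite_Icc _ _).prod (Set.finite_Icc _ _))).subset hsub).to_subtype

section Steps
variable (k : ℤ)

-- swap y,z for P-type sets
lemma Pswap :
    Nat.card {p : ℤ × ℤ × ℤ // (8*k+3 = p.1^2+3*p.2.1^2+3*p.2.2^2) ∧ Odd p.2.2} =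
    Nat.card {p : ℤ × ℤ × ℤ // (8*k+3 = p.1^2+3*p.2.1^2+3*p.2.2^2) ∧ Odd p.2.1} := by
  apply card_bij (fun p => (p.1, p.2.2, p.2.1))
  · rintro ⟨x, y, z⟩ ⟨hp, hodd⟩
    exact ⟨by linear_combination hp, hodd⟩
  · rintro ⟨x, y, z⟩ ⟨x', y', z'⟩ _ _ h
    simp only [Prod.mk.injEq] at h ⊢
    omega
  · rintro ⟨x, y, z⟩ ⟨hp, hodd⟩
    exact ⟨(x, z, y), ⟨by linear_combination hp, hodd⟩, rfl⟩

lemma cardP :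
    Nat.card {p : ℤ × ℤ × ℤ // 8*k+3 = p.1^2+3*p.2.1^2+3*p.2.2^2} =
    2 * Nat.card {p : ℤ × ℤ × ℤ // (8*k+3 = p.1^2+3*p.2.1^2+3*p.2.2^2) ∧ Odd p.2.1} := by
  rw [split_card' (fun p : ℤ × ℤ × ℤ => 8*k+3 = p.1^2+3*p.2.1^2+3*p.2.2^2)
      (fun p => Odd p.2.1) (fun p => Odd p.2.2) (finite3 _) ?_]
  · rw [Pswap]; ring
  · intro p hp
    have hL := (L1 hp).2
    constructor
    · intro hny
      rcases Int.even_or_odd p.2.2 with he | ho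
      · exact absurd (hL.mpr he) hny
      · exact ho
    · intro hz hy
      have := hL.mp hy
      rcases this with ⟨j, hj⟩
      rcases hz with ⟨i, hi⟩
      omega


lemma Qeven :
    Nat.card {p : ℤ × ℤ × ℤ // (32*k+12 = p.1^2+3*p.2.1^2+3*p.2.2^2) ∧ ¬ Odd p.1} =
    Nat.card {p : ℤ × ℤ × ℤ // 8*k+3 = p.1^2+3*p.2.1^2+3*p.2.2^2} := by
  symm
  apply card_bij (fun p => (2*p.1, 2*p.2.1, 2*p.2.2))
  · rintro ⟨x, y, z⟩ hp
    refine ⟨by linear_combination 4*hp, ?_⟩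
    rintro ⟨j, hj⟩; omega
  · rintro ⟨x, y, z⟩ ⟨x', y', z'⟩ _ _ h
    simp only [Prod.mk.injEq] at h ⊢
    omega
  · rintro ⟨X, Y, Z⟩ ⟨hq, hX⟩
    have hEx : Even X := Int.not_odd_iff_even.mp hX
    have hL := (L2 hq).1 hEx
    obtain ⟨x, hx⟩ := hEx
    obtain ⟨y, hy⟩ := hL.1
    obtain ⟨z, hz⟩ := hL.2
    subst hx; subst hy; subst hz
    refine ⟨(x, y, z), ?_, by simp only [Prod.mk.injEq]; omega⟩
    have h4 : 4*(8*k+3) = 4*(x^2+3*y^2+3*z^2) := by linear_combination hq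
    exact mul_left_cancel₀ (by norm_num) h4

lemma Qswap :
    Nat.card {p : ℤ × ℤ × ℤ // ((32*k+12 = p.1^2+3*p.2.1^2+3*p.2.2^2) ∧ Odd p.1) ∧ Odd p.2.2} =
    Nat.card {p : ℤ × ℤ × ℤ // ((32*k+12 = p.1^2+3*p.2.1^2+3*p.2.2^2) ∧ Odd p.1) ∧ Odd p.2.1} := by
  apply card_bij (fun p => (p.1, p.2.2, p.2.1))
  · rintro ⟨x, y, z⟩ ⟨⟨hp, hx⟩, hodd⟩
    exact ⟨⟨by linear_combination hp, hx⟩, hodd⟩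
  · rintro ⟨x, y, z⟩ ⟨x', y', z'⟩ _ _ h
    simp only [Prod.mk.injEq] at h ⊢
    omega
  · rintro ⟨x, y, z⟩ ⟨⟨hp, hx⟩, hodd⟩
    exact ⟨(x, z, y), ⟨⟨by linear_combination hp, hx⟩, hodd⟩, rfl⟩

lemma Qneg :
    Nat.card {p : ℤ × ℤ × ℤ // (((32*k+12 = p.1^2+3*p.2.1^2+3*p.2.2^2) ∧ Odd p.1) ∧ Odd p.2.1) ∧
      ¬ (4:ℤ) ∣ (p.1 - p.2.1)} =
    Nat.card {p : ℤ × ℤ × ℤ // (((32*k+12 = p.1^2+3*p.2.1^2+3*p.2.2^2) ∧ Odd p.1) ∧ Odd p.2.1) ∧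
      (4:ℤ) ∣ (p.1 - p.2.1)} := by
  apply card_bij (fun p => (p.1, -p.2.1, p.2.2))
  · rintro ⟨x, y, z⟩ ⟨⟨⟨hp, hx⟩, hy⟩, hnd⟩
    dsimp only at *
    obtain ⟨a, ha⟩ := hx
    obtain ⟨b, hb⟩ := hy
    have hmem : (((32*k+12 = x^2+3*(-y)^2+3*z^2) ∧ Odd x) ∧ Odd (-y)) ∧ (4:ℤ) ∣ (x - -y) := by
      refine ⟨⟨⟨by linear_combination hp, ⟨a, ha⟩⟩, ⟨-b-1, by omega⟩⟩, by omega⟩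
    exact hmem
  · rintro ⟨x, y, z⟩ ⟨x', y', z'⟩ _ _ h
    simp only [Prod.mk.injEq] at h ⊢
    omega
  · rintro ⟨x, y, z⟩ ⟨⟨⟨hp, hx⟩, hy⟩, hd⟩
    dsimp only at *
    obtain ⟨a, ha⟩ := hx
    obtain ⟨b, hb⟩ := hy
    have hmem : (((32*k+12 = x^2+3*(-y)^2+3*z^2) ∧ Odd x) ∧ Odd (-y)) ∧ ¬ (4:ℤ) ∣ (x - -y) := by
      refine ⟨⟨⟨by linear_combination hp, ⟨a, ha⟩⟩, ⟨-b-1, by omega⟩⟩, by omega⟩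
    refine ⟨(x, -y, z), hmem, ?_⟩
    show ((x:ℤ), -(-y), z) = (x, y, z)
    rw [neg_neg]

lemma QplusP :
    Nat.card {p : ℤ × ℤ × ℤ // (8*k+3 = p.1^2+3*p.2.1^2+3*p.2.2^2) ∧ Odd p.2.1} =
    Nat.card {p : ℤ × ℤ × ℤ // (((32*k+12 = p.1^2+3*p.2.1^2+3*p.2.2^2) ∧ Odd p.1) ∧ Odd p.2.1) ∧
      (4:ℤ) ∣ (p.1 - p.2.1)} := by
  apply card_bij (fun p => (p.1 + 3*p.2.1, p.1 - p.2.1, 2*p.2.2))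
  · rintro ⟨x, y, z⟩ ⟨hp, hy⟩
    dsimp only at *
    obtain ⟨a, ha⟩ := (L1 hp).1
    obtain ⟨b, hb⟩ := hy
    have hmem : (((32*k+12 = (x+3*y)^2+3*(x-y)^2+3*(2*z)^2) ∧ Odd (x+3*y)) ∧ Odd (x-y)) ∧
        (4:ℤ) ∣ ((x+3*y) - (x-y)) := by
      refine ⟨⟨⟨by linear_combination 4*hp, ⟨a+3*b+1, by omega⟩⟩, ⟨a-b-1, by omega⟩⟩, ⟨y, by ring⟩⟩
    exact hmem
  · rintro ⟨x, y, z⟩ ⟨x', y', z'⟩ _ _ h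
    simp only [Prod.mk.injEq] at h ⊢
    omega
  · rintro ⟨X, Y, Z⟩ ⟨⟨⟨hq, hX⟩, hY⟩, hdvd⟩
    dsimp only at *
    have hL := (L2 hq).2 hX
    have hEz : Even Z := hL.1.mp hY
    have h4z : (4:ℤ) ∣ Z := hL.2.1 hY
    obtain ⟨t, ht⟩ := hdvd
    obtain ⟨z, hz⟩ := hEz
    have hX' : X = Y + 4*t := by omega
    subst hX'
    subst hz
    have hPeq : 8*k+3 = (Y+t)^2+3*t^2+3*z^2 := by
      have h4 : 4*(8*k+3) = 4*((Y+t)^2+3*t^2+3*z^2) := by linear_combination hq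
      exact mul_left_cancel₀ (by norm_num) h4
    have hzEven : Even z := by
      obtain ⟨s, hs⟩ := h4z
      exact ⟨s, by omega⟩
    have hto : Odd t := (L1 hPeq).2.mpr hzEven
    refine ⟨(Y + t, t, z), ⟨hPeq, hto⟩, ?_⟩
    show ((Y+t) + 3*t, (Y+t) - t, 2*z) = (Y + 4*t, Y, z + z)
    simp only [Prod.mk.injEq]
    omega

lemma cardQoy :
    Nat.card {p : ℤ × ℤ × ℤ // ((32*k+12 = p.1^2+3*p.2.1^2+3*p.2.2^2) ∧ Odd p.1) ∧ Odd p.2.1} =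
    2 * Nat.card {p : ℤ × ℤ × ℤ // (8*k+3 = p.1^2+3*p.2.1^2+3*p.2.2^2) ∧ Odd p.2.1} := by
  rw [split_card (fun p : ℤ × ℤ × ℤ => ((32*k+12 = p.1^2+3*p.2.1^2+3*p.2.2^2) ∧ Odd p.1) ∧ Odd p.2.1)
      (fun p => (4:ℤ) ∣ (p.1 - p.2.1)) (finite_and (finite_and (finite3 _)))]
  rw [Qneg, ← QplusP]
  ring

lemma cardQodd :
    Nat.card {p : ℤ × ℤ × ℤ // (32*k+12 = p.1^2+3*p.2.1^2+3*p.2.2^2) ∧ Odd p.1} =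
    4 * Nat.card {p : ℤ × ℤ × ℤ // (8*k+3 = p.1^2+3*p.2.1^2+3*p.2.2^2) ∧ Odd p.2.1} := by
  rw [split_card' (fun p : ℤ × ℤ × ℤ => (32*k+12 = p.1^2+3*p.2.1^2+3*p.2.2^2) ∧ Odd p.1)
      (fun p => Odd p.2.1) (fun p => Odd p.2.2) (finite_and (finite3 _)) ?_]
  · have e1 : Nat.card {p : ℤ × ℤ × ℤ //
        ((32*k+12 = p.1^2+3*p.2.1^2+3*p.2.2^2) ∧ Odd p.1) ∧ Odd p.2.2} =
        Nat.card {p : ℤ × ℤ × ℤ //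
        ((32*k+12 = p.1^2+3*p.2.1^2+3*p.2.2^2) ∧ Odd p.1) ∧ Odd p.2.1} := Qswap k
    rw [e1, cardQoy]
    ring
  · rintro p ⟨hq, hx⟩
    have hL := ((L2 hq).2 hx).1
    constructor
    · intro hny
      rcases Int.even_or_odd p.2.2 with he | ho
      · exact absurd (hL.mpr he) hny
      · exact ho
    · rintro ⟨i, hi⟩ ⟨j, hj⟩
      obtain ⟨l, hl⟩ := hL.mp ⟨j, hj⟩
      omega

lemma cardQ :
    Nat.card {p : ℤ × ℤ × ℤ // 32*k+12 = p.1^2+3*p.2.1^2+3*p.2.2^2} =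
    6 * Nat.card {p : ℤ × ℤ × ℤ // (8*k+3 = p.1^2+3*p.2.1^2+3*p.2.2^2) ∧ Odd p.2.1} := by
  rw [split_card (fun p : ℤ × ℤ × ℤ => 32*k+12 = p.1^2+3*p.2.1^2+3*p.2.2^2)
      (fun p => Odd p.1) (finite3 _)]
  rw [cardQodd, Qeven, cardP]
  ring


lemma Rswap :
    Nat.card {p : ℤ × ℤ × ℤ // ((128*k+48 = p.1^2+3*p.2.1^2+3*p.2.2^2) ∧ Odd p.1) ∧ Odd p.2.2} =
    Nat.card {p : ℤ × ℤ × ℤ // ((128*k+48 = p.1^2+3*p.2.1^2+3*p.2.2^2) ∧ Odd p.1) ∧ Odd p.2.1} := by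
  apply card_bij (fun p => (p.1, p.2.2, p.2.1))
  · rintro ⟨x, y, z⟩ ⟨⟨hp, hx⟩, hodd⟩
    exact ⟨⟨by linear_combination hp, hx⟩, hodd⟩
  · rintro ⟨x, y, z⟩ ⟨x', y', z'⟩ _ _ h
    simp only [Prod.mk.injEq] at h ⊢
    omega
  · rintro ⟨x, y, z⟩ ⟨⟨hp, hx⟩, hodd⟩
    exact ⟨(x, z, y), ⟨⟨by linear_combination hp, hx⟩, hodd⟩, rfl⟩

lemma Rneg :
    Nat.card {p : ℤ × ℤ × ℤ // (((128*k+48 = p.1^2+3*p.2.1^2+3*p.2.2^2) ∧ Odd p.1) ∧ Odd p.2.1) ∧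
      ¬ (4:ℤ) ∣ (p.1 - p.2.1)} =
    Nat.card {p : ℤ × ℤ × ℤ // (((128*k+48 = p.1^2+3*p.2.1^2+3*p.2.2^2) ∧ Odd p.1) ∧ Odd p.2.1) ∧
      (4:ℤ) ∣ (p.1 - p.2.1)} := by
  apply card_bij (fun p => (p.1, -p.2.1, p.2.2))
  · rintro ⟨x, y, z⟩ ⟨⟨⟨hp, hx⟩, hy⟩, hnd⟩
    dsimp only at *
    obtain ⟨a, ha⟩ := hx
    obtain ⟨b, hb⟩ := hy
    have hmem : (((128*k+48 = x^2+3*(-y)^2+3*z^2) ∧ Odd x) ∧ Odd (-y)) ∧ (4:ℤ) ∣ (x - -y) := by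
      refine ⟨⟨⟨by linear_combination hp, ⟨a, ha⟩⟩, ⟨-b-1, by omega⟩⟩, by omega⟩
    exact hmem
  · rintro ⟨x, y, z⟩ ⟨x', y', z'⟩ _ _ h
    simp only [Prod.mk.injEq] at h ⊢
    omega
  · rintro ⟨x, y, z⟩ ⟨⟨⟨hp, hx⟩, hy⟩, hd⟩
    dsimp only at *
    obtain ⟨a, ha⟩ := hx
    obtain ⟨b, hb⟩ := hy
    have hmem : (((128*k+48 = x^2+3*(-y)^2+3*z^2) ∧ Odd x) ∧ Odd (-y)) ∧ ¬ (4:ℤ) ∣ (x - -y) := by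
      refine ⟨⟨⟨by linear_combination hp, ⟨a, ha⟩⟩, ⟨-b-1, by omega⟩⟩, by omega⟩
    refine ⟨(x, -y, z), hmem, ?_⟩
    show ((x:ℤ), -(-y), z) = (x, y, z)
    rw [neg_neg]

lemma RplusQ :
    Nat.card {p : ℤ × ℤ × ℤ // ((32*k+12 = p.1^2+3*p.2.1^2+3*p.2.2^2) ∧ Odd p.1) ∧ Odd p.2.2} =
    Nat.card {p : ℤ × ℤ × ℤ // (((128*k+48 = p.1^2+3*p.2.1^2+3*p.2.2^2) ∧ Odd p.1) ∧ Odd p.2.1) ∧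
      (4:ℤ) ∣ (p.1 - p.2.1)} := by
  apply card_bij (fun p => (p.1 + 3*p.2.1, p.1 - p.2.1, 2*p.2.2))
  · rintro ⟨x, y, z⟩ ⟨⟨hq, hx⟩, hz⟩
    dsimp only at *
    have hL := (L2 hq).2 hx
    have hEy : Even y := by
      rcases Int.even_or_odd y with he | ho
      · exact he
      · exact absurd hz (Int.not_odd_iff_even.mpr (hL.1.mp ho))
    obtain ⟨a, ha⟩ := hx
    obtain ⟨b, hb⟩ := hEy
    obtain ⟨c, hc⟩ := hz
    have hmem : (((128*k+48 = (x+3*y)^2+3*(x-y)^2+3*(2*z)^2) ∧ Odd (x+3*y)) ∧ Odd (x-y)) ∧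
        (4:ℤ) ∣ ((x+3*y) - (x-y)) := by
      refine ⟨⟨⟨by linear_combination 4*hq, ⟨a+3*b, by omega⟩⟩, ⟨a-b, by omega⟩⟩, ⟨y, by ring⟩⟩
    exact hmem
  · rintro ⟨x, y, z⟩ ⟨x', y', z'⟩ _ _ h
    simp only [Prod.mk.injEq] at h ⊢
    omega
  · rintro ⟨X, Y, Z⟩ ⟨⟨⟨hr, hX⟩, hY⟩, hdvd⟩
    dsimp only at *
    have hL3 := L3 hr hX
    obtain ⟨c, hc, hcodd⟩ := hL3.2.1 hY
    obtain ⟨t, ht⟩ := hdvd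
    have hX' : X = Y + 4*t := by omega
    subst hX'
    subst hc
    have hQeq : 32*k+12 = (Y+t)^2+3*t^2+3*c^2 := by
      have h4 : 4*(32*k+12) = 4*((Y+t)^2+3*t^2+3*c^2) := by linear_combination hr
      exact mul_left_cancel₀ (by norm_num) h4
    have hOx : Odd (Y+t) := by
      rcases Int.even_or_odd (Y+t) with he | ho
      · exact absurd hcodd (Int.not_odd_iff_even.mpr ((L2 hQeq).1 he).2)
      · exact ho
    refine ⟨(Y+t, t, c), ⟨⟨hQeq, hOx⟩, hcodd⟩, ?_⟩
    show ((Y+t) + 3*t, (Y+t) - t, 2*c) = (Y+4*t, Y, 2*c)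
    simp only [Prod.mk.injEq, and_true, true_and]
    omega

lemma cardRoy :
    Nat.card {p : ℤ × ℤ × ℤ // ((128*k+48 = p.1^2+3*p.2.1^2+3*p.2.2^2) ∧ Odd p.1) ∧ Odd p.2.1} =
    2 * Nat.card {p : ℤ × ℤ × ℤ // ((32*k+12 = p.1^2+3*p.2.1^2+3*p.2.2^2) ∧ Odd p.1) ∧ Odd p.2.2} := by
  rw [split_card (fun p : ℤ × ℤ × ℤ =>
      ((128*k+48 = p.1^2+3*p.2.1^2+3*p.2.2^2) ∧ Odd p.1) ∧ Odd p.2.1)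
      (fun p => (4:ℤ) ∣ (p.1 - p.2.1)) (finite_and (finite_and (finite3 _)))]
  rw [Rneg, ← RplusQ]
  ring

lemma cardRodd :
    Nat.card {p : ℤ × ℤ × ℤ // (128*k+48 = p.1^2+3*p.2.1^2+3*p.2.2^2) ∧ Odd p.1} =
    8 * Nat.card {p : ℤ × ℤ × ℤ // (8*k+3 = p.1^2+3*p.2.1^2+3*p.2.2^2) ∧ Odd p.2.1} := by
  rw [split_card' (fun p : ℤ × ℤ × ℤ => (128*k+48 = p.1^2+3*p.2.1^2+3*p.2.2^2) ∧ Odd p.1)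
      (fun p => Odd p.2.1) (fun p => Odd p.2.2) (finite_and (finite3 _)) ?_]
  · rw [Rswap, cardRoy, Qswap, cardQoy]
    ring
  · rintro p ⟨hr, hx⟩
    have hL := (L3 hr hx).1
    constructor
    · intro hny
      rcases Int.even_or_odd p.2.2 with he | ho
      · exact absurd (hL.mpr he) hny
      · exact ho
    · rintro ⟨i, hi⟩ ⟨j, hj⟩
      obtain ⟨l, hl⟩ := hL.mp ⟨j, hj⟩
      omega

lemma cardT :
    Nat.card {p : ℤ × ℤ × ℤ // 32*k+11 = 2*tri p.1 + 3*tri p.2.1 + 3*tri p.2.2} =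
    Nat.card {p : ℤ × ℤ × ℤ // (128*k+48 = p.1^2+3*p.2.1^2+3*p.2.2^2) ∧ Odd p.1} := by
  apply card_bij (fun p => (2*p.1+1, p.2.1 + p.2.2 + 1, p.2.1 - p.2.2))
  · rintro ⟨x, y, z⟩ hp
    dsimp only at *
    have e1 := two_tri x
    have e2 := two_tri y
    have e3 := two_tri z
    have hmem : (128*k+48 = (2*x+1)^2+3*(y+z+1)^2+3*(y-z)^2) ∧ Odd (2*x+1) :=
      ⟨by linear_combination 4*hp + 4*e1 + 6*e2 + 6*e3, ⟨x, rfl⟩⟩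
    exact hmem
  · rintro ⟨x, y, z⟩ ⟨x', y', z'⟩ _ _ h
    simp only [Prod.mk.injEq] at h ⊢
    omega
  · rintro ⟨X, A, D⟩ ⟨hr, hX⟩
    dsimp only at *
    have hL3 := L3 hr hX
    obtain ⟨x, hx⟩ := hX
    have hAD : Odd (A + D) := by
      rcases Int.even_or_odd A with he | ho
      · have hD : Odd D := by
          rcases Int.even_or_odd D with he2 | ho2
          · exact absurd (hL3.1.mpr he2) (Int.not_odd_iff_even.mpr he)
          · exact ho2
        obtain ⟨i, hi⟩ := he
        obtain ⟨j, hj⟩ := hD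
        exact ⟨i+j, by omega⟩
      · have hD : Even D := hL3.1.mp ho
        obtain ⟨i, hi⟩ := ho
        obtain ⟨j, hj⟩ := hD
        exact ⟨i+j, by omega⟩
    obtain ⟨j, hj⟩ := hAD
    have hD' : D = 2*j+1-A := by omega
    subst hx
    subst hD'
    refine ⟨(x, j, A - 1 - j), ?_, ?_⟩
    · have e1 := two_tri x
      have e2 := two_tri j
      have e3 := two_tri (A-1-j)
      have h4 : 4*(32*k+11 : ℤ) = 4*(2*tri x + 3*tri j + 3*tri (A-1-j)) := by
        linear_combination hr - 4*e1 - 6*e2 - 6*e3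
      exact mul_left_cancel₀ (by norm_num) h4
    · show (2*x+1, j + (A-1-j) + 1, j - (A-1-j)) = (2*x+1, A, 2*j+1-A)
      simp only [Prod.mk.injEq, and_true, true_and]
      omega

end Steps

theorem stmt7 (n : ℕ) (hn : 0 < n) (h : n % 32 = 11) :
    3 * t 2 3 3 n = 4 * N 1 3 3 (n + 1) := by
  obtain ⟨K, hK⟩ : ∃ K : ℕ, n = 32*K + 11 := ⟨n / 32, by omega⟩
  set k : ℤ := (K : ℤ) with hk
  have ht : t 2 3 3 n =
      Nat.card {p : ℤ × ℤ × ℤ // 32*k+11 = 2*tri p.1 + 3*tri p.2.1 + 3*tri p.2.2} := by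
    unfold t
    apply Nat.card_congr
    apply Equiv.subtypeEquivRight
    intro p
    have hcast : ((n:ℕ) : ℤ) = 32*k+11 := by rw [hK]; push_cast; ring
    rw [hcast]
    push_cast
    constructor <;> intro h' <;> linear_combination h'
  have hN : N 1 3 3 (n+1) =
      Nat.card {p : ℤ × ℤ × ℤ // 32*k+12 = p.1^2+3*p.2.1^2+3*p.2.2^2} := by
    unfold N
    apply Nat.card_congr
    apply Equiv.subtypeEquivRight
    intro p
    have hcast : ((n+1:ℕ) : ℤ) = 32*k+12 := by rw [hK]; push_cast; ring
    rw [hcast]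
    push_cast
    constructor <;> intro h' <;> linear_combination h'
  rw [ht, hN, cardT, cardRodd, cardQ]
  ring
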